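/- There exists ε₀ > 0 such that for all 0 < ε ≤ ε₀ the following hold: φ₁₁(t) < 0 for all t ≥ 0 and φ₁₁(t) = −1/8 for all t ≥ ε; φ₂₂(t) = −1/8 for all t ≥ ε; φ₂₂(0) > 0 and there exists a unique r₀ ∈ (0,ε) with φ₂₂(r₀) = 0; φ₂₂ is differentiable at r₀ with φ₂₂'(r₀) ≠ 0; φ₂(t) ≥ 0 for all t ≥ 0 and φ₂(t) = 0 for all t ≥ ε; and each of φ₁₁, φ₂₂, φ₂ is continuous and bounded on [0,1] and real-analytic on (0,ε). -/

import Mathlib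

open Real Set Filter Topology MeasureTheory

noncomputable def s0 (ε t : ℝ) : ℝ :=
  if 0 ≤ t ∧ t ≤ ε then π/2 + (t/ε) * Real.sqrt (1 - (t/ε)^2) + Real.arcsin (t/ε) else π

noncomputable def s12 (ε t : ℝ) : ℝ :=
  if 0 ≤ t ∧ t ≤ ε then -(2/3) * (1 - (t/ε)^2) ^ ((3:ℝ)/2) else 0

noncomputable def s2 (ε t : ℝ) : ℝ :=
  if 0 ≤ t ∧ t ≤ ε then
    π/8 + (1/12) * ((t/ε) * Real.sqrt (1 - (t/ε)^2) * (5 - 2*(t/ε)^2) + 3 * Real.arcsin (t/ε))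
  else π/4

noncomputable def s22 (ε t : ℝ) : ℝ :=
  if 0 ≤ t ∧ t ≤ ε then
    π/8 + (1/4) * ((t/ε) * Real.sqrt (1 - (t/ε)^2) * (2*(t/ε)^2 - 1) + Real.arcsin (t/ε))
  else π/4

noncomputable def s3 (ε t : ℝ) : ℝ :=
  if 0 ≤ t ∧ t ≤ ε then -(2/15) * (1 - (t/ε)^2) ^ ((5:ℝ)/2) else 0

noncomputable def s32 (ε t : ℝ) : ℝ :=
  if 0 ≤ t ∧ t ≤ ε then -(2/15) * (2 + 3*(t/ε)^2) * (1 - (t/ε)^2) ^ ((3:ℝ)/2) else 0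

noncomputable def phi11 (ε t : ℝ) : ℝ :=
  (1/2) * (s22 ε t * s2 ε t - s3 ε t * s12 ε t) / ((s12 ε t)^2 - s22 ε t * s0 ε t)

noncomputable def phi22 (ε t : ℝ) : ℝ :=
  (1/2) * ((s22 ε t)^2 - s32 ε t * s12 ε t) / ((s12 ε t)^2 - s22 ε t * s0 ε t)

noncomputable def phi2d (ε t : ℝ) : ℝ :=
  s12 ε t / ((s12 ε t)^2 - s22 ε t * s0 ε t)

/-- The principal Sturm–Liouville coefficient on the disc, as a function of the
radius `r`; this is `p(1−r)` in the paper's notation. -/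
noncomputable def pd (ε r0 r : ℝ) : ℝ :=
  (1/8) * (1 - ε) * Real.sign (1 - r0 - r) *
    Real.exp (∫ s in (1-ε)..r, (phi11 ε (1-s) + s * phi2d ε (1-s)) / (s * phi22 ε (1-s)))

/-- `q(1−r)` as a function of `r`. -/
noncomputable def qd (ε r0 r : ℝ) : ℝ :=
  -(pd ε r0 r / r^2) * (phi11 ε (1-r) / phi22 ε (1-r))

/-- The weight `w(1−r)` as a function of `r`. -/
noncomputable def wd (ε r0 r : ℝ) : ℝ := -pd ε r0 r / phi22 ε (1-r)

/-! Every `σ` is a fixed profile of `x = min (t / ε) 1 ∈ [0, 1]`, so `ε` only rescales the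
variable and each claim is a fact about the profiles on `[0, 1]`. There the common denominator
is at most `4/9 - π²/16 < 0`, the numerator of `φ₁₁` is at least `π²/64 - 4/45 > 0` and
`σ₁₂ ≤ 0`. The numerator of `φ₂₂` has derivative
`4x²√(1-x²) σ₂₂ + (8/15) x (1 + 4x²) (1 - x²)² > 0` on `(0, 1)` and changes sign from
`π²/64 - 8/45 < 0` to `π²/16 > 0`, so it has exactly one zero, a simple one. -/

section OneSubSq

variable {x : ℝ}

lemma le_arcsin_self (hx : x ∈ Icc (0:ℝ) 1) : x ≤ arcsin x := by
  simpa [sin_arcsin (by linarith [hx.1]) hx.2] using sin_le (arcsin_nonneg.2 hx.1)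

lemma sqrt_one_sub_sq_le_one : √(1 - x^2) ≤ 1 :=
  sqrt_le_one.mpr (by nlinarith)

lemma continuous_sqrt_one_sub_sq : Continuous fun x : ℝ => √(1 - x^2) := by fun_prop

lemma hasDerivAt_sqrt_one_sub_sq (hx : x ∈ Ioo (-1:ℝ) 1) :
    HasDerivAt (fun y => √(1 - y^2)) (-x / √(1 - x^2)) x := by
  have hpos : 0 < 1 - x^2 := by nlinarith [hx.1, hx.2]
  refine (((hasDerivAt_pow 2 x).const_sub 1).sqrt hpos.ne').congr_deriv ?_
  field_simp
  ring

lemma analyticAt_sqrt_one_sub_sq (hx : x ∈ Ioo (-1:ℝ) 1) :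
    AnalyticAt ℝ (fun y => √(1 - y^2)) x :=
  (contDiffAt_sqrt (by nlinarith [hx.1, hx.2])).analyticAt.comp (by fun_prop)

lemma analyticAt_arcsin (hx : x ∈ Ioo (-1:ℝ) 1) : AnalyticAt ℝ arcsin x :=
  (contDiffAt_arcsin (by linarith [hx.1]) hx.2.ne).analyticAt

end OneSubSq

lemma HasDerivAt.div_of_eq_zero {𝕜 : Type*} [NontriviallyNormedField 𝕜] {f g : 𝕜 → 𝕜}
    {f' g' x : 𝕜} (hf : HasDerivAt f f' x) (hg : HasDerivAt g g' x) (hfx : f x = 0)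
    (hgx : g x ≠ 0) : HasDerivAt (fun y => f y / g y) (f' / g x) x :=
  (hf.div hg hgx).congr_deriv (by field_simp; simp [hfx])

lemma IsCompact.exists_bound_of_continuousOn₃ {X : Type*} [TopologicalSpace X] {s : Set X}
    (hs : IsCompact s) {f g h : X → ℝ} (hf : ContinuousOn f s) (hg : ContinuousOn g s)
    (hh : ContinuousOn h s) : ∃ C, ∀ x ∈ s, |f x| ≤ C ∧ |g x| ≤ C ∧ |h x| ≤ C := by
  obtain ⟨C, hC⟩ := hs.exists_bound_of_continuousOn ((hf.abs.add hg.abs).add hh.abs)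
  refine ⟨C, fun x hx => ?_⟩
  have : |f x| + |g x| + |h x| ≤ C := (le_abs_self _).trans (hC x hx)
  have := abs_nonneg (f x); have := abs_nonneg (g x); have := abs_nonneg (h x)
  exact ⟨by linarith, by linarith, by linarith⟩

lemma rpow_natCast_div_two {a : ℝ} (n : ℕ) (ha : 0 ≤ a) : a ^ ((n : ℝ) / 2) = √a ^ n := by
  rw [sqrt_eq_rpow, ← rpow_natCast, ← rpow_mul ha]
  ring_nf

lemma min_div_mem_Icc {ε t : ℝ} (hε : 0 < ε) (ht : 0 ≤ t) : min (t / ε) 1 ∈ Icc (0:ℝ) 1 :=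
  ⟨le_min (div_nonneg ht hε.le) zero_le_one, min_le_right _ _⟩

def IsRescaledProfile (ε : ℝ) (f g : ℝ → ℝ) : Prop :=
  ∀ t, 0 ≤ t → f t = g (min (t / ε) 1)

namespace IsRescaledProfile

variable {ε t : ℝ} {f g : ℝ → ℝ}

lemma of_ite (hε : 0 < ε) {b : ℝ → ℝ} {c : ℝ} (hb : ∀ x ∈ Icc (0:ℝ) 1, b x = g x) (hc : g 1 = c) :
    IsRescaledProfile ε (fun t => if 0 ≤ t ∧ t ≤ ε then b (t / ε) else c) g := by
  intro t ht
  dsimp only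
  by_cases htε : t ≤ ε
  · rw [if_pos ⟨ht, htε⟩, min_eq_left ((div_le_one hε).2 htε)]
    exact hb _ ⟨div_nonneg ht hε.le, (div_le_one hε).2 htε⟩
  · rw [if_neg (fun h => htε h.2), min_eq_right ((one_le_div hε).2 (not_le.1 htε).le), hc]

variable (h : IsRescaledProfile ε f g) (hε : 0 < ε)
include h hε

lemma apply_of_mem_Icc (ht : t ∈ Icc 0 ε) : f t = g (t / ε) := by
  rw [h t ht.1, min_eq_left ((div_le_one hε).2 ht.2)]

lemma apply_of_le (ht : ε ≤ t) : f t = g 1 := by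
  rw [h t (hε.le.trans ht), min_eq_right ((one_le_div hε).2 ht)]

lemma forall_apply {p : ℝ → Prop} (hg : ∀ x ∈ Icc (0:ℝ) 1, p (g x)) : ∀ t, 0 ≤ t → p (f t) :=
  fun t ht => h t ht ▸ hg _ (min_div_mem_Icc hε ht)

lemma continuousOn (hg : ContinuousOn g (Icc 0 1)) : ContinuousOn f (Ici 0) :=
  (hg.comp (by fun_prop) fun _ ht => min_div_mem_Icc hε ht).congr fun t ht => h t ht

lemma eventuallyEq (ht : t ∈ Ioo 0 ε) : f =ᶠ[𝓝 t] fun u => g (u / ε) := by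
  filter_upwards [Ioo_mem_nhds ht.1 ht.2] with u hu
  exact h.apply_of_mem_Icc hε (Ioo_subset_Icc_self hu)

lemma analyticOnNhd (hg : ∀ x ∈ Ioo (0:ℝ) 1, AnalyticAt ℝ g x) :
    AnalyticOnNhd ℝ f (Ioo 0 ε) := fun t ht =>
  have hdiv : AnalyticAt ℝ (fun u => u / ε) t := analyticAt_id.div_const
  have hg' := hg _ ⟨div_pos ht.1 hε, (div_lt_one hε).2 ht.2⟩
  (AnalyticAt.comp (f := fun u => u / ε) hg' hdiv).congr (h.eventuallyEq hε ht).symm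

lemma hasDerivAt {g' : ℝ} (ht : t ∈ Ioo 0 ε) (hg : HasDerivAt g g' (t / ε)) :
    HasDerivAt f (g' / ε) t := by
  have := hg.comp t ((hasDerivAt_id t).div_const ε)
  exact (this.congr_deriv (by ring)).congr_of_eventuallyEq (h.eventuallyEq hε ht)

end IsRescaledProfile

noncomputable def sig0 (x : ℝ) : ℝ := π/2 + x * √(1 - x^2) + arcsin x
noncomputable def sig12 (x : ℝ) : ℝ := -(2/3) * √(1 - x^2) ^ 3
noncomputable def sig2 (x : ℝ) : ℝ := π/8 + (1/12) * (x * √(1 - x^2) * (5 - 2*x^2) + 3 * arcsin x)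
noncomputable def sig22 (x : ℝ) : ℝ := π/8 + (1/4) * (x * √(1 - x^2) * (2*x^2 - 1) + arcsin x)
noncomputable def sig3 (x : ℝ) : ℝ := -(2/15) * √(1 - x^2) ^ 5
noncomputable def sig32 (x : ℝ) : ℝ := -(2/15) * (2 + 3*x^2) * √(1 - x^2) ^ 3

noncomputable def den (x : ℝ) : ℝ := sig12 x ^ 2 - sig22 x * sig0 x
noncomputable def num11 (x : ℝ) : ℝ := sig22 x * sig2 x - sig3 x * sig12 x
noncomputable def num22 (x : ℝ) : ℝ := sig22 x ^ 2 - sig32 x * sig12 x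

noncomputable def phi11Profile (x : ℝ) : ℝ := (1/2) * num11 x / den x
noncomputable def phi22Profile (x : ℝ) : ℝ := (1/2) * num22 x / den x
noncomputable def phi2dProfile (x : ℝ) : ℝ := sig12 x / den x

lemma sig0_one : sig0 1 = π := by norm_num [sig0, arcsin_one]
lemma sig12_one : sig12 1 = 0 := by norm_num [sig12]
lemma sig2_one : sig2 1 = π/4 := by norm_num [sig2, arcsin_one]; ring
lemma sig22_one : sig22 1 = π/4 := by norm_num [sig22, arcsin_one]; ring
lemma sig3_one : sig3 1 = 0 := by norm_num [sig3]
lemma sig32_one : sig32 1 = 0 := by norm_num [sig32]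

lemma phi11Profile_one : phi11Profile 1 = -(1/8) := by
  have : π ≠ 0 := pi_ne_zero
  simp only [phi11Profile, num11, den, sig0_one, sig12_one, sig2_one, sig22_one, sig3_one]
  field_simp
  ring

lemma phi22Profile_one : phi22Profile 1 = -(1/8) := by
  have : π ≠ 0 := pi_ne_zero
  simp only [phi22Profile, num22, den, sig0_one, sig12_one, sig22_one, sig32_one]
  field_simp
  ring

lemma phi2dProfile_one : phi2dProfile 1 = 0 := by simp [phi2dProfile, sig12_one]

lemma num22_zero_neg : num22 0 < 0 := by
  norm_num [num22, sig22, sig32, sig12]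
  nlinarith [pi_pos, pi_lt_d2]

lemma num22_one_pos : 0 < num22 1 := by
  simp only [num22, sig22_one, sig32_one, sig12_one]
  nlinarith [pi_pos]

section Bounds

variable {x : ℝ}

lemma pi_div_two_le_sig0 (hx : x ∈ Icc (0:ℝ) 1) : π/2 ≤ sig0 x := by
  have := le_arcsin_self hx
  have := mul_nonneg hx.1 (sqrt_nonneg (1 - x^2))
  unfold sig0
  linarith [hx.1]

lemma pi_div_eight_le_sig22 (hx : x ∈ Icc (0:ℝ) 1) : π/8 ≤ sig22 x := by
  have := le_arcsin_self hx
  have : 0 ≤ x * (1 - √(1 - x^2)) := mul_nonneg hx.1 (by linarith [sqrt_one_sub_sq_le_one (x := x)])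
  have : 0 ≤ x^3 * √(1 - x^2) := mul_nonneg (pow_nonneg hx.1 3) (sqrt_nonneg _)
  unfold sig22
  nlinarith

lemma pi_div_eight_le_sig2 (hx : x ∈ Icc (0:ℝ) 1) : π/8 ≤ sig2 x := by
  have := le_arcsin_self hx
  have : 0 ≤ x * √(1 - x^2) * (5 - 2*x^2) :=
    mul_nonneg (mul_nonneg hx.1 (sqrt_nonneg _)) (by nlinarith [hx.1, hx.2])
  unfold sig2
  linarith [hx.1]

lemma sig12_nonpos : sig12 x ≤ 0 := by
  have : 0 ≤ √(1 - x^2) ^ 3 := by positivity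
  unfold sig12
  linarith

lemma den_neg (hx : x ∈ Icc (0:ℝ) 1) : den x < 0 := by
  have hs : √(1 - x^2) ^ 3 ≤ 1 := pow_le_one₀ (sqrt_nonneg _) sqrt_one_sub_sq_le_one
  have : π/8 * (π/2) ≤ sig22 x * sig0 x :=
    mul_le_mul (pi_div_eight_le_sig22 hx) (pi_div_two_le_sig0 hx) (by positivity)
      (by linarith [pi_div_eight_le_sig22 hx, pi_pos])
  unfold den sig12
  nlinarith [pi_gt_three, pow_nonneg (sqrt_nonneg (1 - x^2)) 3]

lemma num11_pos (hx : x ∈ Icc (0:ℝ) 1) : 0 < num11 x := by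
  have h8 : √(1 - x^2) ^ 8 ≤ 1 := pow_le_one₀ (sqrt_nonneg _) sqrt_one_sub_sq_le_one
  have : π/8 * (π/8) ≤ sig22 x * sig2 x :=
    mul_le_mul (pi_div_eight_le_sig22 hx) (pi_div_eight_le_sig2 hx) (by positivity)
      (by linarith [pi_div_eight_le_sig22 hx, pi_pos])
  have : sig3 x * sig12 x = (4/45) * √(1 - x^2) ^ 8 := by unfold sig3 sig12; ring
  unfold num11
  nlinarith [pi_gt_three]

end Bounds

section Derivatives

variable {x : ℝ}

lemma hasDerivAt_sig12 (hx : x ∈ Ioo (-1:ℝ) 1) : HasDerivAt sig12 (2*x*√(1 - x^2)) x := by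
  have hpos : 0 < 1 - x^2 := by nlinarith [hx.1, hx.2]
  refine (((hasDerivAt_sqrt_one_sub_sq hx).pow 3).const_mul (-(2/3))).congr_deriv ?_
  field_simp
  ring

lemma hasDerivAt_sig22 (hx : x ∈ Ioo (-1:ℝ) 1) : HasDerivAt sig22 (2*x^2*√(1 - x^2)) x := by
  have hpos : 0 < 1 - x^2 := by nlinarith [hx.1, hx.2]
  have hpoly : HasDerivAt (fun y : ℝ => 2*y^2 - 1) (4*x) x := by
    refine (((hasDerivAt_pow 2 x).const_mul 2).sub_const 1).congr_deriv ?_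
    push_cast
    ring
  refine ((((hasDerivAt_id' x).mul (hasDerivAt_sqrt_one_sub_sq hx)).mul hpoly).add
    (hasDerivAt_arcsin (by linarith [hx.1]) hx.2.ne) |>.const_mul (1/4)
    |>.const_add (π/8)).congr_deriv ?_
  simp only [Pi.mul_apply]
  field_simp
  linear_combination (-(1 + 2*x^2)) * sq_sqrt hpos.le

lemma hasDerivAt_sig32 (hx : x ∈ Ioo (-1:ℝ) 1) : HasDerivAt sig32 (2*x^3*√(1 - x^2)) x := by
  have hpos : 0 < 1 - x^2 := by nlinarith [hx.1, hx.2]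
  have hpoly : HasDerivAt (fun y : ℝ => -(2/15) * (2 + 3*y^2)) (-(4/5)*x) x := by
    refine ((((hasDerivAt_pow 2 x).const_mul 3).const_add 2).const_mul (-(2/15))).congr_deriv ?_
    push_cast
    ring
  refine (hpoly.mul ((hasDerivAt_sqrt_one_sub_sq hx).pow 3)).congr_deriv ?_
  simp only [Pi.pow_apply]
  field_simp
  linear_combination (-60*x*√(1 - x^2)^2) * sq_sqrt hpos.le

lemma hasDerivAt_num22 (hx : x ∈ Ioo (-1:ℝ) 1) :
    HasDerivAt num22 (4*x^2*√(1 - x^2)*sig22 x + (8/15)*x*(1 + 4*x^2)*(1 - x^2)^2) x := by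
  have hs4 : √(1 - x^2) ^ 4 = (1 - x^2) ^ 2 := by
    rw [show 4 = 2 * 2 by rfl, pow_mul, sq_sqrt (by nlinarith [hx.1, hx.2])]
  refine (((hasDerivAt_sig22 hx).pow 2).sub
    ((hasDerivAt_sig32 hx).mul (hasDerivAt_sig12 hx))).congr_deriv ?_
  simp only [sig32, sig12]
  linear_combination ((8/15)*x + (32/15)*x^3) * hs4

lemma num22_deriv_pos (hx : x ∈ Ioo (0:ℝ) 1) :
    0 < 4*x^2*√(1 - x^2)*sig22 x + (8/15)*x*(1 + 4*x^2)*(1 - x^2)^2 := by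
  have : 0 ≤ 4*x^2*√(1 - x^2)*sig22 x := mul_nonneg (by positivity)
    (by linarith [pi_div_eight_le_sig22 (Ioo_subset_Icc_self hx), pi_pos])
  have : 0 < (8/15)*x*(1 + 4*x^2)*(1 - x^2)^2 :=
    mul_pos (by nlinarith [hx.1]) (pow_pos (by nlinarith [hx.1, hx.2]) 2)
  linarith

end Derivatives

lemma continuous_sig12 : Continuous sig12 := by
  have := continuous_sqrt_one_sub_sq
  unfold sig12
  fun_prop

lemma continuous_den : Continuous den := by
  have := continuous_sqrt_one_sub_sq
  unfold den sig12 sig22 sig0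
  fun_prop

lemma continuous_num11 : Continuous num11 := by
  have := continuous_sqrt_one_sub_sq
  unfold num11 sig22 sig2 sig3 sig12
  fun_prop

lemma continuous_num22 : Continuous num22 := by
  have := continuous_sqrt_one_sub_sq
  unfold num22 sig22 sig32 sig12
  fun_prop

lemma strictMonoOn_num22 : StrictMonoOn num22 (Icc 0 1) := by
  refine strictMonoOn_of_deriv_pos (convex_Icc 0 1) continuous_num22.continuousOn fun x hx => ?_
  rw [interior_Icc] at hx
  rw [(hasDerivAt_num22 ⟨by linarith [hx.1], hx.2⟩).deriv]
  exact num22_deriv_pos hx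

lemma continuousOn_phi11Profile : ContinuousOn phi11Profile (Icc 0 1) :=
  (continuous_const.mul continuous_num11).continuousOn.div continuous_den.continuousOn
    fun _ hx => (den_neg hx).ne

lemma continuousOn_phi22Profile : ContinuousOn phi22Profile (Icc 0 1) :=
  (continuous_const.mul continuous_num22).continuousOn.div continuous_den.continuousOn
    fun _ hx => (den_neg hx).ne

lemma continuousOn_phi2dProfile : ContinuousOn phi2dProfile (Icc 0 1) :=
  continuous_sig12.continuousOn.div continuous_den.continuousOn fun _ hx => (den_neg hx).ne

section Analyticity

variable {x : ℝ}

lemma analyticAt_sig12 (hx : x ∈ Ioo (-1:ℝ) 1) : AnalyticAt ℝ sig12 x := by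
  have := analyticAt_sqrt_one_sub_sq hx
  unfold sig12
  fun_prop

lemma analyticAt_den (hx : x ∈ Ioo (-1:ℝ) 1) : AnalyticAt ℝ den x := by
  have := analyticAt_sqrt_one_sub_sq hx
  have := analyticAt_arcsin hx
  unfold den sig12 sig22 sig0
  fun_prop

lemma analyticAt_num11 (hx : x ∈ Ioo (-1:ℝ) 1) : AnalyticAt ℝ num11 x := by
  have := analyticAt_sqrt_one_sub_sq hx
  have := analyticAt_arcsin hx
  unfold num11 sig22 sig2 sig3 sig12
  fun_prop

lemma analyticAt_num22 (hx : x ∈ Ioo (-1:ℝ) 1) : AnalyticAt ℝ num22 x := by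
  have := analyticAt_sqrt_one_sub_sq hx
  have := analyticAt_arcsin hx
  unfold num22 sig22 sig32 sig12
  fun_prop

variable (hx : x ∈ Ioo (0:ℝ) 1)
include hx

lemma analyticAt_phi11Profile : AnalyticAt ℝ phi11Profile x :=
  have hx' : x ∈ Ioo (-1:ℝ) 1 := ⟨by linarith [hx.1], hx.2⟩
  (analyticAt_const.mul (analyticAt_num11 hx')).div (analyticAt_den hx')
    (den_neg (Ioo_subset_Icc_self hx)).ne

lemma analyticAt_phi22Profile : AnalyticAt ℝ phi22Profile x :=
  have hx' : x ∈ Ioo (-1:ℝ) 1 := ⟨by linarith [hx.1], hx.2⟩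
  (analyticAt_const.mul (analyticAt_num22 hx')).div (analyticAt_den hx')
    (den_neg (Ioo_subset_Icc_self hx)).ne

lemma analyticAt_phi2dProfile : AnalyticAt ℝ phi2dProfile x :=
  have hx' : x ∈ Ioo (-1:ℝ) 1 := ⟨by linarith [hx.1], hx.2⟩
  (analyticAt_sig12 hx').div (analyticAt_den hx') (den_neg (Ioo_subset_Icc_self hx)).ne

end Analyticity

lemma exists_num22_eq_zero : ∃ x ∈ Ioo (0:ℝ) 1, num22 x = 0 :=
  intermediate_value_Ioo zero_le_one continuous_num22.continuousOn
    ⟨num22_zero_neg, num22_one_pos⟩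

lemma hasDerivAt_phi22Profile_of_num22_eq_zero {x : ℝ} (hx : x ∈ Ioo (0:ℝ) 1)
    (h0 : num22 x = 0) : ∃ d ≠ 0, HasDerivAt phi22Profile d x := by
  have hx' : x ∈ Ioo (-1:ℝ) 1 := ⟨by linarith [hx.1], hx.2⟩
  have hden := den_neg (Ioo_subset_Icc_self hx)
  have hderiv : HasDerivAt phi22Profile _ x :=
    ((hasDerivAt_num22 hx').const_mul (1/2)).div_of_eq_zero
      (analyticAt_den hx').differentiableAt.hasDerivAt (by simp [h0]) hden.ne
  exact ⟨_, div_ne_zero (mul_ne_zero (by norm_num) (num22_deriv_pos hx).ne') hden.ne, hderiv⟩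

lemma phi22Profile_eq_zero_iff {x : ℝ} (hx : x ∈ Icc (0:ℝ) 1) :
    phi22Profile x = 0 ↔ num22 x = 0 := by
  simp [phi22Profile, (den_neg hx).ne]

lemma phi11Profile_neg {x : ℝ} (hx : x ∈ Icc (0:ℝ) 1) : phi11Profile x < 0 :=
  div_neg_of_pos_of_neg (by linarith [num11_pos hx]) (den_neg hx)

lemma phi2dProfile_nonneg {x : ℝ} (hx : x ∈ Icc (0:ℝ) 1) : 0 ≤ phi2dProfile x :=
  div_nonneg_of_nonpos sig12_nonpos (den_neg hx).le

lemma phi22Profile_zero_pos : 0 < phi22Profile 0 :=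
  div_pos_of_neg_of_neg (by linarith [num22_zero_neg]) (den_neg ⟨le_rfl, zero_le_one⟩)

section Rescaling

variable {ε : ℝ} (hε : 0 < ε)
include hε

lemma isRescaledProfile_s0 : IsRescaledProfile ε (s0 ε) sig0 :=
  IsRescaledProfile.of_ite hε (fun _ _ => rfl) sig0_one

lemma isRescaledProfile_s12 : IsRescaledProfile ε (s12 ε) sig12 :=
  IsRescaledProfile.of_ite hε (b := fun x => -(2/3) * (1 - x^2) ^ ((3:ℝ)/2))
    (fun x hx => by
      rw [sig12, ← rpow_natCast_div_two 3 (by nlinarith [hx.1, hx.2])]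
      norm_num) sig12_one

lemma isRescaledProfile_s2 : IsRescaledProfile ε (s2 ε) sig2 :=
  IsRescaledProfile.of_ite hε (fun _ _ => rfl) sig2_one

lemma isRescaledProfile_s22 : IsRescaledProfile ε (s22 ε) sig22 :=
  IsRescaledProfile.of_ite hε (fun _ _ => rfl) sig22_one

lemma isRescaledProfile_s3 : IsRescaledProfile ε (s3 ε) sig3 :=
  IsRescaledProfile.of_ite hε (b := fun x => -(2/15) * (1 - x^2) ^ ((5:ℝ)/2))
    (fun x hx => by
      rw [sig3, ← rpow_natCast_div_two 5 (by nlinarith [hx.1, hx.2])]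
      norm_num) sig3_one

lemma isRescaledProfile_s32 : IsRescaledProfile ε (s32 ε) sig32 :=
  IsRescaledProfile.of_ite hε (b := fun x => -(2/15) * (2 + 3*x^2) * (1 - x^2) ^ ((3:ℝ)/2))
    (fun x hx => by
      rw [sig32, ← rpow_natCast_div_two 3 (by nlinarith [hx.1, hx.2])]
      norm_num) sig32_one

lemma isRescaledProfile_phi11 : IsRescaledProfile ε (phi11 ε) phi11Profile := fun t ht => by
  simp only [phi11, phi11Profile, num11, den, isRescaledProfile_s0 hε t ht,
    isRescaledProfile_s12 hε t ht, isRescaledProfile_s2 hε t ht, isRescaledProfile_s22 hε t ht,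
    isRescaledProfile_s3 hε t ht]

lemma isRescaledProfile_phi22 : IsRescaledProfile ε (phi22 ε) phi22Profile := fun t ht => by
  simp only [phi22, phi22Profile, num22, den, isRescaledProfile_s0 hε t ht,
    isRescaledProfile_s12 hε t ht, isRescaledProfile_s22 hε t ht, isRescaledProfile_s32 hε t ht]

lemma isRescaledProfile_phi2d : IsRescaledProfile ε (phi2d ε) phi2dProfile := fun t ht => by
  simp only [phi2d, phi2dProfile, den, isRescaledProfile_s0 hε t ht,
    isRescaledProfile_s12 hε t ht, isRescaledProfile_s22 hε t ht]

end Rescaling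

lemma exists_unique_zero_phi22 {ε : ℝ} (hε : 0 < ε) :
    ∃ r0 ∈ Ioo (0:ℝ) ε, phi22 ε r0 = 0 ∧ (∀ r ∈ Ioo (0:ℝ) ε, phi22 ε r = 0 → r = r0) ∧
      ∃ d : ℝ, d ≠ 0 ∧ HasDerivAt (phi22 ε) d r0 := by
  have h := isRescaledProfile_phi22 hε
  obtain ⟨x0, hx0, hN⟩ := exists_num22_eq_zero
  obtain ⟨d, hd, hderiv⟩ := hasDerivAt_phi22Profile_of_num22_eq_zero hx0 hN
  have hr0 : ε * x0 ∈ Ioo 0 ε := ⟨mul_pos hε hx0.1, mul_lt_of_lt_one_right hε hx0.2⟩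
  have hdiv : ε * x0 / ε = x0 := by field_simp
  refine ⟨ε * x0, hr0, ?_, fun r hr hr0' => ?_,
    d / ε, div_ne_zero hd hε.ne', h.hasDerivAt hε hr0 (by rwa [hdiv])⟩
  · rw [h.apply_of_mem_Icc hε (Ioo_subset_Icc_self hr0), hdiv,
      phi22Profile_eq_zero_iff (Ioo_subset_Icc_self hx0)]
    exact hN
  · have hx : r / ε ∈ Icc (0:ℝ) 1 := ⟨div_nonneg hr.1.le hε.le, (div_le_one hε).2 hr.2.le⟩
    rw [h.apply_of_mem_Icc hε (Ioo_subset_Icc_self hr), phi22Profile_eq_zero_iff hx] at hr0'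
    have := strictMonoOn_num22.injOn hx (Ioo_subset_Icc_self hx0) (hr0'.trans hN.symm)
    rw [div_eq_iff hε.ne'] at this
    linarith

theorem stmt13 :
    ∃ ε₀ > (0:ℝ), ∀ ε : ℝ, 0 < ε → ε ≤ ε₀ →
      (∀ t : ℝ, 0 ≤ t → phi11 ε t < 0) ∧
      (∀ t : ℝ, ε ≤ t → phi11 ε t = -(1/8)) ∧
      (∀ t : ℝ, ε ≤ t → phi22 ε t = -(1/8)) ∧
      0 < phi22 ε 0 ∧
      (∃ r0 ∈ Ioo (0:ℝ) ε, phi22 ε r0 = 0 ∧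
        (∀ r' ∈ Ioo (0:ℝ) ε, phi22 ε r' = 0 → r' = r0) ∧
        ∃ d : ℝ, d ≠ 0 ∧ HasDerivAt (phi22 ε) d r0) ∧
      (∀ t : ℝ, 0 ≤ t → 0 ≤ phi2d ε t) ∧
      (∀ t : ℝ, ε ≤ t → phi2d ε t = 0) ∧
      (ContinuousOn (phi11 ε) (Icc 0 1) ∧ ContinuousOn (phi22 ε) (Icc 0 1) ∧
        ContinuousOn (phi2d ε) (Icc 0 1)) ∧
      (∃ C : ℝ, ∀ t ∈ Icc (0:ℝ) 1,
        |phi11 ε t| ≤ C ∧ |phi22 ε t| ≤ C ∧ |phi2d ε t| ≤ C) ∧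
      (AnalyticOnNhd ℝ (phi11 ε) (Ioo 0 ε) ∧ AnalyticOnNhd ℝ (phi22 ε) (Ioo 0 ε) ∧
        AnalyticOnNhd ℝ (phi2d ε) (Ioo 0 ε)) := by
  refine ⟨1, one_pos, fun ε hε _ => ?_⟩
  have h11 := isRescaledProfile_phi11 hε
  have h22 := isRescaledProfile_phi22 hε
  have h2d := isRescaledProfile_phi2d hε
  have hIcc : Icc (0:ℝ) 1 ⊆ Ici 0 := Icc_subset_Ici_self
  have hc11 := (h11.continuousOn hε continuousOn_phi11Profile).mono hIcc
  have hc22 := (h22.continuousOn hε continuousOn_phi22Profile).mono hIcc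
  have hc2d := (h2d.continuousOn hε continuousOn_phi2dProfile).mono hIcc
  refine ⟨h11.forall_apply hε (p := (· < 0)) fun _ => phi11Profile_neg,
    fun t ht => (h11.apply_of_le hε ht).trans phi11Profile_one,
    fun t ht => (h22.apply_of_le hε ht).trans phi22Profile_one, ?_, exists_unique_zero_phi22 hε,
    h2d.forall_apply hε (p := (0 ≤ ·)) fun _ => phi2dProfile_nonneg,
    fun t ht => (h2d.apply_of_le hε ht).trans phi2dProfile_one, ⟨hc11, hc22, hc2d⟩,
    isCompact_Icc.exists_bound_of_continuousOn₃ hc11 hc22 hc2d,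
    h11.analyticOnNhd hε fun _ => analyticAt_phi11Profile,
    h22.analyticOnNhd hε fun _ => analyticAt_phi22Profile,
    h2d.analyticOnNhd hε fun _ => analyticAt_phi2dProfile⟩
  rw [h22.apply_of_mem_Icc hε ⟨le_rfl, hε.le⟩, zero_div]
  exact phi22Profile_zero_pos
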